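/- arXiv:2510.13679 — 3 statements merged into one kernel-verified Lean document; each statement's English description precedes it below -/
import Mathlib

section
/- Let M be a totally unimodular integer matrix (every minor lies in {0, 1, −1}) with columns indexed by a finite set S. Then for every field k, a subset I ⊆ S yields linearly independent columns of M over ℚ if and only if it yields linearly independent columns of M ⊗ k over k. Consequently the matroid realized by the columns of M is the same over every field. -/
open Matrix

/-- Columns of a rectangular matrix over a field are linearly independent iff some square
row-submatrix is invertible. -/
theorem cols_linearIndependent_iff_exists_submatrix {F : Type*} [Field F] {m n : ℕ}
    (A : Matrix (Fin m) (Fin n) F) :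
    LinearIndependent F (fun j i => A i j) ↔
      ∃ r : Fin n → Fin m, Function.Injective r ∧ IsUnit (A.submatrix r id) := by
  constructor
  · intro h
    have hT : LinearIndependent F Aᵀ := h
    have hrank : A.rank = n := by
      have h2 : Aᵀ.rank = Fintype.card (Fin n) := hT.rank_matrix
      rwa [rank_transpose, Fintype.card_fin] at h2
    have hspan : Submodule.span F (Set.range A) = ⊤ := by
      apply Submodule.eq_top_of_finrank_eq
      rw [show Set.range A = Set.range A.row from rfl, ← Matrix.rank_eq_finrank_span_row, hrank]
      simp [Module.finrank_pi]
    obtain ⟨t, hts, hspan', hli⟩ := exists_linearIndependent F (Set.range A)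
    rw [hspan] at hspan'
    have htfin : t.Finite := hli.setFinite
    have : Fintype t := htfin.fintype
    have hb : Module.Basis t F (Fin n → F) := Module.Basis.mk hli (by rw [Subtype.range_coe, hspan'])
    have hcard : Fintype.card t = n := by
      have := Module.finrank_eq_card_basis hb
      simp only [Module.finrank_pi, Fintype.card_fin] at this
      omega
    have g : Fin n ≃ t := (Fintype.equivFinOfCardEq hcard).symm
    choose r0 hr0 using fun x : t => (hts x.2 : (x : Fin n → F) ∈ Set.range A)
    have hr0inj : Function.Injective r0 := by
      intro x y hxy
      have : (x : Fin n → F) = y := by rw [← hr0 x, ← hr0 y, hxy]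
      exact Subtype.ext this
    refine ⟨fun j => r0 (g j), hr0inj.comp g.injective, ?_⟩
    rw [← linearIndependent_rows_iff_isUnit]
    have : (fun i => (A.submatrix (fun j => r0 (g j)) id) i) =
        (fun x : t => (x : Fin n → F)) ∘ g := by
      funext i j
      simpa using congrFun (hr0 (g i)) j
    rw [show (A.submatrix (fun j => r0 (g j)) id).row = (fun x : t => (x : Fin n → F)) ∘ g from this]
    exact hli.comp g g.injective
  · rintro ⟨r, hrinj, hunit⟩
    have hcols : LinearIndependent F (fun j => (A.submatrix r id)ᵀ j) :=
      linearIndependent_cols_iff_isUnit.2 hunit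
    have : (fun j => (A.submatrix r id)ᵀ j) =
        (LinearMap.funLeft F F r) ∘ (fun j i => A i j) := by
      funext j; ext i; simp [Matrix.submatrix]
    rw [this] at hcols
    exact hcols.of_comp _

theorem cast_cols_linearIndependent_iff {F : Type*} [Field F] {m n : ℕ}
    (B : Matrix (Fin m) (Fin n) ℤ)
    (hd : ∀ r : Fin n → Fin m, Function.Injective r →
      (B.submatrix r id).det ∈ ({0, 1, -1} : Set ℤ)) :
    LinearIndependent F (fun j i => ((B i j : ℤ) : F)) ↔
      ∃ r : Fin n → Fin m, Function.Injective r ∧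
        (B.submatrix r id).det ∈ ({1, -1} : Set ℤ) := by
  have := cols_linearIndependent_iff_exists_submatrix (B.map (Int.cast : ℤ → F))
  simp only [Matrix.map_apply] at this
  rw [this]
  apply exists_congr
  intro r
  apply and_congr_right
  intro hr
  have hmap : (B.map (Int.cast : ℤ → F)).submatrix r id = (B.submatrix r id).map Int.cast := rfl
  have hdet : ((B.map (Int.cast : ℤ → F)).submatrix r id).det
      = (((B.submatrix r id).det : ℤ) : F) := by
    rw [hmap]
    exact (RingHom.map_det (Int.castRingHom F) (B.submatrix r id)).symm
  rw [Matrix.isUnit_iff_isUnit_det, isUnit_iff_ne_zero, hdet]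
  constructor
  · intro hne
    have h0 : (B.submatrix r id).det ≠ 0 := by
      intro h; rw [h] at hne; exact hne (by norm_num)
    rcases hd r hr with h | h | h
    · exact absurd h h0
    · exact Or.inl h
    · exact Or.inr h
  · rintro (h | h) <;> rw [h] <;> norm_num

/-- A totally unimodular integer matrix (every square minor lies in `{0, 1, −1}`)
realizes the same matroid over every field: a set `I` of columns is linearly independent
over `ℚ` if and only if the corresponding columns, with entries mapped into any field
`K`, are linearly independent over `K`. -/
theorem totally_unimodular_matroid_independent_iff
    (m : ℕ) (S : Type*) [Fintype S] [DecidableEq S]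
    (M : Matrix (Fin m) S ℤ)
    (hTU : ∀ (k : ℕ) (r : Fin k → Fin m) (c : Fin k → S),
      Function.Injective r → Function.Injective c →
      (M.submatrix r c).det ∈ ({0, 1, -1} : Set ℤ))
    (K : Type*) [Field K] (I : Set S) :
    LinearIndependent ℚ (fun s : I => fun i : Fin m => ((M i s : ℤ) : ℚ)) ↔
      LinearIndependent K (fun s : I => fun i : Fin m => ((M i s : ℤ) : K)) := by
  classical
  have : Fintype I := Fintype.ofFinite I
  set n := Fintype.card I with hn
  let e : Fin n ≃ I := (Fintype.equivFin I).symm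
  let B : Matrix (Fin m) (Fin n) ℤ := fun i j => M i (e j)
  have hB : ∀ r : Fin n → Fin m, Function.Injective r →
      (B.submatrix r id).det ∈ ({0, 1, -1} : Set ℤ) := by
    intro r hr
    exact hTU n r (fun j => (e j : S)) hr
      (fun a b hab => e.injective (Subtype.ext hab))
  have keyQ : LinearIndependent ℚ (fun s : I => fun i : Fin m => ((M i s : ℤ) : ℚ)) ↔
      ∃ r : Fin n → Fin m, Function.Injective r ∧
        (B.submatrix r id).det ∈ ({1, -1} : Set ℤ) := by
    rw [← linearIndependent_equiv e]
    exact cast_cols_linearIndependent_iff B hB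
  have keyK : LinearIndependent K (fun s : I => fun i : Fin m => ((M i s : ℤ) : K)) ↔
      ∃ r : Fin n → Fin m, Function.Injective r ∧
        (B.submatrix r id).det ∈ ({1, -1} : Set ℤ) := by
    rw [← linearIndependent_equiv e]
    exact cast_cols_linearIndependent_iff B hB
  rw [keyQ, keyK]
end

section
/- The 5×10 matrix R₁₀ = [I₅ | C], where C is the circulant-type matrix with rows (−1,1,0,0,1), (1,−1,1,0,0), (0,1,−1,1,0), (0,0,1,−1,1), (1,0,0,1,−1), is totally unimodular: every square minor of R₁₀ lies in {0, 1, −1}. -/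
/-- The Seymour–Bixby matrix `R₁₀ = [I₅ | C]` realizing the regular matroid `R₁₀`. -/
def R10 : Matrix (Fin 5) (Fin 10) ℤ :=
  !![1, 0, 0, 0, 0, -1,  1,  0,  0,  1;
     0, 1, 0, 0, 0,  1, -1,  1,  0,  0;
     0, 0, 1, 0, 0,  0,  1, -1,  1,  0;
     0, 0, 0, 1, 0,  0,  0,  1, -1,  1;
     0, 0, 0, 0, 1,  1,  0,  0,  1, -1]

/-- The circulant-type block `C` of `R₁₀`. -/
def Cm : Matrix (Fin 5) (Fin 5) ℤ :=
  !![-1,  1,  0,  0,  1;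
      1, -1,  1,  0,  0;
      0,  1, -1,  1,  0;
      0,  0,  1, -1,  1;
      1,  0,  0,  1, -1]

/-- Laplace expansion helper along the first row. -/
def goDet (f : List (List ℤ) → ℤ) (M : List (List ℤ)) : ℤ → ℕ → List ℤ → ℤ
  | _, _, [] => 0
  | s, j, a :: rest =>
    (if a = 0 then 0 else s * a * f (M.map (·.eraseIdx j))) + goDet f M (-s) (j + 1) rest

/-- Fueled list-based determinant (Laplace expansion along the first row). -/
def detL : ℕ → List (List ℤ) → ℤ
  | 0, _ => 1
  | _ + 1, [] => 1
  | k + 1, r :: M => goDet (detL k) M 1 0 r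

lemma goDet_ofFn (f : List (List ℤ) → ℤ) (M : List (List ℤ)) :
    ∀ (n : ℕ) (a : Fin n → ℤ) (s : ℤ) (j : ℕ),
      goDet f M s j (List.ofFn a)
        = ∑ t : Fin n, s * (-1) ^ (t : ℕ) * a t * f (M.map (·.eraseIdx (j + t))) := by
  intro n
  induction n with
  | zero => intro a s j; simp [goDet]
  | succ n ih =>
    intro a s j
    rw [List.ofFn_succ]
    show (if a 0 = 0 then 0 else s * a 0 * f (M.map (·.eraseIdx j)))
        + goDet f M (-s) (j + 1) (List.ofFn fun i => a i.succ) = _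
    rw [ih, Fin.sum_univ_succ]
    congr 1
    · simp only [Fin.val_zero, pow_zero, add_zero, mul_one]
      split_ifs with h
      · simp [h]
      · ring
    · apply Finset.sum_congr rfl
      intro t _
      rw [Fin.val_succ]
      have harg : j + ((t : ℕ) + 1) = (j + 1) + t := by omega
      rw [harg]
      ring

lemma eraseIdx_ofFn {n : ℕ} (b : Fin (n + 1) → ℤ) (t : Fin (n + 1)) :
    (List.ofFn b).eraseIdx (t : ℕ) = List.ofFn (fun l : Fin n => b (t.succAbove l)) := by
  apply List.ext_getElem
  · simp [List.length_eraseIdx, t.isLt]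
  · intro i h1 h2
    simp only [List.length_ofFn] at h2
    simp only [List.getElem_eraseIdx, List.getElem_ofFn]
    split_ifs with hi h'
    · congr 1
      apply Fin.ext
      simp [Fin.succAbove, Fin.lt_def, hi]
    · congr 1
      apply Fin.ext
      simp [Fin.succAbove, Fin.lt_def, hi]

lemma detL_eq : ∀ (k : ℕ) (A : Matrix (Fin k) (Fin k) ℤ),
    detL k (List.ofFn fun i => List.ofFn fun j => A i j) = A.det := by
  intro k
  induction k with
  | zero => intro A; rw [Matrix.det_fin_zero]; rfl
  | succ k ih =>
    intro A
    have step : detL (k + 1) (List.ofFn fun i => List.ofFn fun j => A i j)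
        = goDet (detL k) (List.ofFn fun i : Fin k => List.ofFn fun j => A i.succ j) 1 0
            (List.ofFn fun j => A 0 j) := by
      conv_lhs => rw [List.ofFn_succ]
      rfl
    rw [step, goDet_ofFn, Matrix.det_succ_row_zero]
    apply Finset.sum_congr rfl
    intro t _
    rw [List.map_ofFn]
    have harg : ∀ i : Fin k,
        ((fun l : List ℤ => l.eraseIdx (0 + (t : ℕ))) ∘ fun i : Fin k => List.ofFn fun j => A i.succ j) i
          = List.ofFn fun l : Fin k => A i.succ (t.succAbove l) := by
      intro i
      simp only [Function.comp_apply, Nat.zero_add]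
      exact eraseIdx_ofFn (fun j => A i.succ j) t
    rw [funext harg]
    have := ih (A.submatrix Fin.succ t.succAbove)
    simp only [Matrix.submatrix_apply] at this
    rw [this]
    ring

/-- check whether a determinant value is 0, 1 or -1 -/
def ok (d : ℤ) : Bool := d = 0 || d = 1 || d = -1

/-- the minor test for the matrix `Cm` -/
def tst (k : ℕ) (v w : Fin k → Fin 5) : Bool :=
  ok (detL k (List.ofFn fun i => List.ofFn fun j => Cm (v i) (w j)))

lemma all_guard {α : Type*} {l : List α} {P : α → Bool} (h : l.all P = true)
    (x : α) (hx : x ∈ l) : P x = true := by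
  rw [List.all_eq_true] at h
  exact h x hx

lemma ifGuard_true {c : Prop} [Decidable c] {X : Bool}
    (h : (if c then X else true) = true) (hc : c) : X = true := by
  rwa [if_pos hc] at h

lemma chk1 : ((List.finRange 5).all fun r1 =>
    (List.finRange 5).all fun c1 => tst 1 ![r1] ![c1]) = true := by decide

lemma chk2 : ((List.finRange 5).all fun r1 => (List.finRange 5).all fun r2 =>
    if r1 < r2 then
      ((List.finRange 5).all fun c1 => (List.finRange 5).all fun c2 =>
        if c1 < c2 then tst 2 ![r1, r2] ![c1, c2] else true)
    else true) = true := by decide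

lemma chk3 : ((List.finRange 5).all fun r1 => (List.finRange 5).all fun r2 =>
    if r1 < r2 then ((List.finRange 5).all fun r3 => if r2 < r3 then
      ((List.finRange 5).all fun c1 => (List.finRange 5).all fun c2 =>
        if c1 < c2 then ((List.finRange 5).all fun c3 => if c2 < c3 then
          tst 3 ![r1, r2, r3] ![c1, c2, c3] else true) else true)
      else true) else true) = true := by decide

lemma chk4 : ((List.finRange 5).all fun r1 => (List.finRange 5).all fun r2 =>
    if r1 < r2 then ((List.finRange 5).all fun r3 => if r2 < r3 then
      ((List.finRange 5).all fun r4 => if r3 < r4 then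
      ((List.finRange 5).all fun c1 => (List.finRange 5).all fun c2 =>
        if c1 < c2 then ((List.finRange 5).all fun c3 => if c2 < c3 then
          ((List.finRange 5).all fun c4 => if c3 < c4 then
          tst 4 ![r1, r2, r3, r4] ![c1, c2, c3, c4] else true) else true) else true)
      else true) else true) else true) = true := by decide

lemma chk5 : ((List.finRange 5).all fun r1 => (List.finRange 5).all fun r2 =>
    if r1 < r2 then ((List.finRange 5).all fun r3 => if r2 < r3 then
      ((List.finRange 5).all fun r4 => if r3 < r4 then
      ((List.finRange 5).all fun r5 => if r4 < r5 then
      ((List.finRange 5).all fun c1 => (List.finRange 5).all fun c2 =>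
        if c1 < c2 then ((List.finRange 5).all fun c3 => if c2 < c3 then
          ((List.finRange 5).all fun c4 => if c3 < c4 then
          ((List.finRange 5).all fun c5 => if c4 < c5 then
          tst 5 ![r1, r2, r3, r4, r5] ![c1, c2, c3, c4, c5] else true) else true)
          else true) else true)
      else true) else true) else true) else true) = true := by decide

lemma B1 (v w : Fin 1 → Fin 5) : tst 1 v w = true := by
  have h := all_guard chk1 (v 0) (List.mem_finRange _)
  have h := all_guard h (w 0) (List.mem_finRange _)
  have e1 : ![v 0] = v := by funext i; fin_cases i <;> rfl
  have e2 : ![w 0] = w := by funext i; fin_cases i <;> rfl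
  rw [← e1, ← e2]; exact h

lemma B2 (v w : Fin 2 → Fin 5) (hv : StrictMono v) (hw : StrictMono w) : tst 2 v w = true := by
  have h := all_guard chk2 (v 0) (List.mem_finRange _)
  have h := all_guard h (v 1) (List.mem_finRange _)
  have h := ifGuard_true h (hv (show (0 : Fin 2) < 1 by decide))
  have h := all_guard h (w 0) (List.mem_finRange _)
  have h := all_guard h (w 1) (List.mem_finRange _)
  have h := ifGuard_true h (hw (show (0 : Fin 2) < 1 by decide))
  have e1 : ![v 0, v 1] = v := by funext i; fin_cases i <;> rfl
  have e2 : ![w 0, w 1] = w := by funext i; fin_cases i <;> rfl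
  rw [← e1, ← e2]; exact h

lemma B3 (v w : Fin 3 → Fin 5) (hv : StrictMono v) (hw : StrictMono w) : tst 3 v w = true := by
  have h := all_guard chk3 (v 0) (List.mem_finRange _)
  have h := all_guard h (v 1) (List.mem_finRange _)
  have h := ifGuard_true h (hv (show (0 : Fin 3) < 1 by decide))
  have h := all_guard h (v 2) (List.mem_finRange _)
  have h := ifGuard_true h (hv (show (1 : Fin 3) < 2 by decide))
  have h := all_guard h (w 0) (List.mem_finRange _)
  have h := all_guard h (w 1) (List.mem_finRange _)
  have h := ifGuard_true h (hw (show (0 : Fin 3) < 1 by decide))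
  have h := all_guard h (w 2) (List.mem_finRange _)
  have h := ifGuard_true h (hw (show (1 : Fin 3) < 2 by decide))
  have e1 : ![v 0, v 1, v 2] = v := by funext i; fin_cases i <;> rfl
  have e2 : ![w 0, w 1, w 2] = w := by funext i; fin_cases i <;> rfl
  rw [← e1, ← e2]; exact h

lemma B4 (v w : Fin 4 → Fin 5) (hv : StrictMono v) (hw : StrictMono w) : tst 4 v w = true := by
  have h := all_guard chk4 (v 0) (List.mem_finRange _)
  have h := all_guard h (v 1) (List.mem_finRange _)
  have h := ifGuard_true h (hv (show (0 : Fin 4) < 1 by decide))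
  have h := all_guard h (v 2) (List.mem_finRange _)
  have h := ifGuard_true h (hv (show (1 : Fin 4) < 2 by decide))
  have h := all_guard h (v 3) (List.mem_finRange _)
  have h := ifGuard_true h (hv (show (2 : Fin 4) < 3 by decide))
  have h := all_guard h (w 0) (List.mem_finRange _)
  have h := all_guard h (w 1) (List.mem_finRange _)
  have h := ifGuard_true h (hw (show (0 : Fin 4) < 1 by decide))
  have h := all_guard h (w 2) (List.mem_finRange _)
  have h := ifGuard_true h (hw (show (1 : Fin 4) < 2 by decide))
  have h := all_guard h (w 3) (List.mem_finRange _)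
  have h := ifGuard_true h (hw (show (2 : Fin 4) < 3 by decide))
  have e1 : ![v 0, v 1, v 2, v 3] = v := by funext i; fin_cases i <;> rfl
  have e2 : ![w 0, w 1, w 2, w 3] = w := by funext i; fin_cases i <;> rfl
  rw [← e1, ← e2]; exact h

lemma B5 (v w : Fin 5 → Fin 5) (hv : StrictMono v) (hw : StrictMono w) : tst 5 v w = true := by
  have h := all_guard chk5 (v 0) (List.mem_finRange _)
  have h := all_guard h (v 1) (List.mem_finRange _)
  have h := ifGuard_true h (hv (show (0 : Fin 5) < 1 by decide))
  have h := all_guard h (v 2) (List.mem_finRange _)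
  have h := ifGuard_true h (hv (show (1 : Fin 5) < 2 by decide))
  have h := all_guard h (v 3) (List.mem_finRange _)
  have h := ifGuard_true h (hv (show (2 : Fin 5) < 3 by decide))
  have h := all_guard h (v 4) (List.mem_finRange _)
  have h := ifGuard_true h (hv (show (3 : Fin 5) < 4 by decide))
  have h := all_guard h (w 0) (List.mem_finRange _)
  have h := all_guard h (w 1) (List.mem_finRange _)
  have h := ifGuard_true h (hw (show (0 : Fin 5) < 1 by decide))
  have h := all_guard h (w 2) (List.mem_finRange _)
  have h := ifGuard_true h (hw (show (1 : Fin 5) < 2 by decide))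
  have h := all_guard h (w 3) (List.mem_finRange _)
  have h := ifGuard_true h (hw (show (2 : Fin 5) < 3 by decide))
  have h := all_guard h (w 4) (List.mem_finRange _)
  have h := ifGuard_true h (hw (show (3 : Fin 5) < 4 by decide))
  have e1 : ![v 0, v 1, v 2, v 3, v 4] = v := by funext i; fin_cases i <;> rfl
  have e2 : ![w 0, w 1, w 2, w 3, w 4] = w := by funext i; fin_cases i <;> rfl
  rw [← e1, ← e2]; exact h

/-- Reduction of total unimodularity to strictly monotone row/column selections. -/
lemma tu_of_strictMono {m n : ℕ} (A : Matrix (Fin m) (Fin n) ℤ)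
    (h : ∀ (k : ℕ) (f : Fin k → Fin m) (g : Fin k → Fin n), StrictMono f → StrictMono g →
      (A.submatrix f g).det ∈ Set.range (SignType.cast : SignType → ℤ)) :
    A.IsTotallyUnimodular := by
  intro k f g hf hg
  set σ := Tuple.sort f with hσ
  set τ := Tuple.sort g with hτ
  have hf' : StrictMono (f ∘ σ) :=
    (Tuple.monotone_sort f).strictMono_of_injective (hf.comp σ.injective)
  have hg' : StrictMono (g ∘ τ) :=
    (Tuple.monotone_sort g).strictMono_of_injective (hg.comp τ.injective)
  obtain ⟨s, hs⟩ := h k (f ∘ σ) (g ∘ τ) hf' hg'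
  have hA : A.submatrix f g
      = ((A.submatrix (f ∘ σ) (g ∘ τ)).submatrix id ⇑τ.symm).submatrix ⇑σ.symm id := by
    ext i j
    simp [Matrix.submatrix_apply]
  rw [hA, Matrix.det_permute, Matrix.det_permute', ← hs]
  rcases Int.units_eq_one_or (Equiv.Perm.sign σ.symm) with h1 | h1 <;>
    rcases Int.units_eq_one_or (Equiv.Perm.sign τ.symm) with h2 | h2 <;>
      rw [h1, h2]
  · exact ⟨s, by simp⟩
  · exact ⟨-s, by cases s <;> simp⟩
  · exact ⟨-s, by cases s <;> simp⟩
  · exact ⟨s, by cases s <;> simp⟩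

lemma Cm_TU : Cm.IsTotallyUnimodular := by
  apply tu_of_strictMono
  intro k f g hf hg
  have hk : k ≤ 5 := by simpa using Fintype.card_le_of_injective f hf.injective
  have ht : tst k f g = true := by
    interval_cases k
    · rfl
    · exact B1 f g
    · exact B2 f g hf hg
    · exact B3 f g hf hg
    · exact B4 f g hf hg
    · exact B5 f g hf hg
  have hd := detL_eq k (Cm.submatrix f g)
  simp only [Matrix.submatrix_apply] at hd
  unfold tst ok at ht
  rw [hd] at ht
  simp only [Bool.or_eq_true, decide_eq_true_eq] at ht
  rcases ht with (h0 | h1) | h2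
  · exact ⟨0, by simp [h0]⟩
  · exact ⟨1, by simp [h1]⟩
  · exact ⟨-1, by simp [h2]⟩

lemma R10_TU : R10.IsTotallyUnimodular := by
  have h1 : (Matrix.fromRows Cm.transpose (1 : Matrix (Fin 5) (Fin 5) ℤ)).IsTotallyUnimodular := by
    apply Cm_TU.transpose.fromRows_unitlike
    intro _ i
    refine ⟨i, SignType.pos, ?_⟩
    funext j
    simp [Matrix.one_apply, Pi.single_apply, eq_comm]
  have h2 : R10 = ((Matrix.fromRows Cm.transpose (1 : Matrix (Fin 5) (Fin 5) ℤ)).transpose).submatrix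
      id (Sum.swap ∘ ⇑finSumFinEquiv.symm) := by
    decide
  rw [h2]
  exact (h1.transpose.submatrix _ _)

/-- The matrix `R₁₀` is totally unimodular: every square minor lies in `{0, 1, −1}`. -/
theorem R10_totally_unimodular :
    ∀ (k : ℕ) (r : Fin k → Fin 5) (c : Fin k → Fin 10),
      Function.Injective r → Function.Injective c →
      (R10.submatrix r c).det ∈ ({0, 1, -1} : Set ℤ) := by
  intro k r c hr hc
  obtain ⟨s, hs⟩ := R10_TU k r c hr hc
  rw [← hs]
  cases s <;> simp
end

section
/- The Segre cubic Y₀ = {Σ_{i=0}^5 x_i = Σ_{i=0}^5 x_i³ = 0} ⊂ ℙ⁵ has exactly 10 singular points, namely the orbit under permutation of coordinates of the point [1 : 1 : 1 : −1 : −1 : −1], and each of these is an ordinary double point. -/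
open scoped BigOperators

/-- The coordinates of the distinguished singular point `[1 : 1 : 1 : −1 : −1 : −1]`. -/
def segreVec : Fin 6 → ℂ := ![1, 1, 1, -1, -1, -1]

/-- A point lies on the Segre cubic `{Σ xᵢ = Σ xᵢ³ = 0} ⊂ ℙ⁵`. -/
def onSegre (x : Fin 6 → ℂ) : Prop :=
  (∑ i, x i) = 0 ∧ (∑ i, (x i) ^ 3) = 0

/-- The Jacobian criterion: the gradients of `Σ xᵢ` and `Σ xᵢ³` (i.e. `(1, …, 1)` and
`(3x₀², …, 3x₅²)`) are linearly dependent at `x`. -/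
def singularAt (x : Fin 6 → ℂ) : Prop :=
  ∃ l m : ℂ, ¬(l = 0 ∧ m = 0) ∧ ∀ i, l + m * (3 * (x i) ^ 2) = 0

/-- Ordinary double point: the Hessian `Σ 6xᵢ yᵢ zᵢ` of the cubic equation, restricted
to the hyperplane `{Σ yᵢ = 0}`, has kernel exactly the line spanned by `x` (so the local
quadratic cone is nondegenerate). -/
def isODPAt (x : Fin 6 → ℂ) : Prop :=
  ∀ y : Fin 6 → ℂ, (∑ i, y i) = 0 →
    (∀ z : Fin 6 → ℂ, (∑ i, z i) = 0 → (∑ i, 6 * x i * y i * z i) = 0) →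
    ∃ t : ℂ, y = t • x

/-- The singular locus of the Segre cubic, as a subset of `ℙ⁵ = ℙ(ℂ⁶)`. -/
def segreSing : Set (Projectivization ℂ (Fin 6 → ℂ)) :=
  {p | onSegre p.rep ∧ singularAt p.rep}

/-! The Jacobian criterion forces all `xᵢ²` to be equal, so a singular point is `c • ε` for a
sign vector `ε ∈ {±1}⁶`, and `Σ xᵢ = 0` says that `ε` has exactly three entries `+1`. The twenty
3-subsets give every such point twice (`S` and `Sᶜ` give `ε` and `-ε`), hence ten points, and they
form one orbit since permutations act transitively on subsets of a given size. At such a point,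
testing the Hessian against `eᵢ - eⱼ` shows that `xᵢ yᵢ` is constant, and `xᵢ² = x₀²` turns this
into `y = (y₀ / x₀) • x`. -/

open Finset Projectivization
open scoped Pointwise

section SignVector

variable {ι : Type*} [DecidableEq ι]

def signVec (S : Finset ι) : ι → ℂ := fun i => if i ∈ S then 1 else -1

lemma signVec_apply_sq (S : Finset ι) (i : ι) : signVec S i ^ 2 = 1 := by
  unfold signVec; split_ifs <;> norm_num

lemma signVec_apply_pow_three (S : Finset ι) (i : ι) : signVec S i ^ 3 = signVec S i := by
  unfold signVec; split_ifs <;> norm_num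

lemma signVec_ne_zero [Nonempty ι] (S : Finset ι) : signVec S ≠ 0 := fun h => by
  simpa [h] using signVec_apply_sq S (Classical.arbitrary ι)

lemma signVec_injective : Function.Injective (signVec : Finset ι → ι → ℂ) := by
  intro S T h
  ext i
  have hi := congrFun h i
  unfold signVec at hi
  split_ifs at hi <;> norm_num at hi <;> tauto

lemma signVec_compl [Fintype ι] (S : Finset ι) : signVec Sᶜ = -signVec S := by
  funext i
  by_cases hi : i ∈ S <;> simp [signVec, hi]

lemma signVec_apply_perm (S : Finset ι) (σ : Equiv.Perm ι) (i : ι) :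
    signVec S (σ i) = signVec (σ⁻¹ • S) i := by
  simp only [signVec, mem_inv_smul_finset_iff, Equiv.Perm.smul_def]

lemma exists_perm_comp_signVec_iff (T : Finset ι) (v : ι → ℂ) :
    (∃ σ : Equiv.Perm ι, ∀ i, v i = signVec T (σ i)) ↔
      ∃ S : Finset ι, S.card = T.card ∧ v = signVec S := by
  simp only [signVec_apply_perm]
  constructor
  · rintro ⟨σ, hσ⟩
    exact ⟨σ⁻¹ • T, card_smul_finset _ _, funext hσ⟩
  · rintro ⟨S, hST, rfl⟩
    obtain ⟨σ, hσ⟩ := Set.powersetCard.isPretransitive.exists_smul_eq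
      (Set.powersetCard.ofCard hST) (Set.powersetCard.ofCard rfl)
    have hσT : σ • S = T := congrArg Subtype.val hσ
    exact ⟨σ, fun i => by rw [← hσT, inv_smul_smul]⟩

lemma sum_signVec_eq_zero_iff [Fintype ι] (S : Finset ι) :
    ∑ i, signVec S i = 0 ↔ 2 * S.card = Fintype.card ι := by
  have hsum : ∑ i, signVec S i = S.card - Sᶜ.card := by
    simp only [signVec, sum_ite, subset_univ, filter_mem_eq_of_subset, sum_const, nsmul_eq_mul,
      mul_one, filter_not, compl_eq_univ_sdiff]
    ring
  have hcard := card_add_card_compl S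
  rw [hsum, sub_eq_zero]
  constructor
  · intro h
    have : S.card = Sᶜ.card := by exact_mod_cast h
    omega
  · intro h
    rw [show Sᶜ.card = S.card by omega]

lemma exists_eq_smul_signVec_of_sq_eq [Fintype ι] {x : ι → ℂ} {j : ι}
    (h : ∀ i, x i ^ 2 = x j ^ 2) : ∃ S : Finset ι, x = x j • signVec S := by
  classical
  refine ⟨univ.filter fun i => x i = x j, funext fun i => ?_⟩
  rcases sq_eq_sq_iff_eq_or_eq_neg.1 (h i) with hi | hi <;> simp [signVec, hi]

variable [Nonempty ι]

noncomputable def signPoint (S : Finset ι) : Projectivization ℂ (ι → ℂ) :=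
  mk ℂ (signVec S) (signVec_ne_zero S)

lemma signPoint_compl [Fintype ι] (S : Finset ι) : signPoint Sᶜ = signPoint S :=
  (mk_eq_mk_iff' ℂ _ _ _ _).2 ⟨-1, by rw [signVec_compl, neg_one_smul]⟩

lemma signPoint_injOn (j : ι) : Set.InjOn signPoint {S : Finset ι | j ∈ S} := by
  intro S hS T hT h
  obtain ⟨a, ha⟩ := (mk_eq_mk_iff' ℂ _ _ _ _).1 h
  have ha1 : a = 1 := by
    simpa [signVec, hS.out, hT.out] using congrFun ha j
  rw [ha1, one_smul] at ha
  exact signVec_injective ha.symm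

end SignVector

lemma mul_eq_mul_of_hessian_eq_zero {ι : Type*} [Fintype ι] [DecidableEq ι] {x y : ι → ℂ}
    (H : ∀ z : ι → ℂ, ∑ i, z i = 0 → ∑ i, 6 * x i * y i * z i = 0) (i j : ι) :
    x i * y i = x j * y j := by
  have := H (Pi.single i 1 - Pi.single j 1) (by simp [sum_sub_distrib])
  simp only [Pi.sub_apply, Pi.single_apply, mul_sub, mul_ite, mul_one, mul_zero, sum_sub_distrib,
    sum_ite_eq', mem_univ, ↓reduceIte] at this
  linear_combination this / 6

lemma singularAt_iff {x : Fin 6 → ℂ} : singularAt x ↔ ∀ i, x i ^ 2 = x 0 ^ 2 := by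
  constructor
  · rintro ⟨l, m, hlm, h⟩ i
    have hm : m ≠ 0 := by
      rintro rfl
      exact hlm ⟨by simpa using h 0, rfl⟩
    have : m * 3 * (x i ^ 2 - x 0 ^ 2) = 0 := by linear_combination h i - h 0
    simpa [hm, sub_eq_zero] using this
  · intro h
    exact ⟨-3 * x 0 ^ 2, 1, by simp, fun i => by rw [h i]; ring⟩

lemma isODPAt_of_singularAt {x : Fin 6 → ℂ} (hx : x ≠ 0) (hs : singularAt x) : isODPAt x := by
  intro y _ H
  have hsq := singularAt_iff.1 hs
  have hx0 : x 0 ≠ 0 := fun h => hx (funext fun i => by simpa [h] using hsq i)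
  refine ⟨y 0 / x 0, funext fun i => ?_⟩
  have hxi : x i ≠ 0 := fun h => hx0 (by simpa [h] using (hsq i).symm)
  have hxy := mul_eq_mul_of_hessian_eq_zero H i 0
  rw [Pi.smul_apply, smul_eq_mul, div_mul_eq_mul_div, eq_div_iff hx0]
  apply mul_left_cancel₀ hxi
  linear_combination x 0 * hxy - y 0 * hsq i

lemma onSegre_smul_signVec {c : ℂ} (hc : c ≠ 0) (S : Finset (Fin 6)) :
    onSegre (c • signVec S) ↔ S.card = 3 := by
  simp only [onSegre, Pi.smul_apply, smul_eq_mul, mul_pow, signVec_apply_pow_three,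
    ← mul_sum, mul_eq_zero, hc, pow_eq_zero_iff, false_or, ne_eq, OfNat.ofNat_ne_zero,
    not_false_eq_true, and_self, sum_signVec_eq_zero_iff, Fintype.card_fin]
  omega

lemma singularAt_smul_signVec (c : ℂ) (S : Finset (Fin 6)) : singularAt (c • signVec S) :=
  singularAt_iff.2 fun i => by simp only [Pi.smul_apply, smul_eq_mul, mul_pow, signVec_apply_sq]

lemma onSegre_and_singularAt_iff {x : Fin 6 → ℂ} (hx : x ≠ 0) :
    onSegre x ∧ singularAt x ↔
      ∃ c : ℂ, c ≠ 0 ∧ ∃ S : Finset (Fin 6), S.card = 3 ∧ x = c • signVec S := by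
  constructor
  · rintro ⟨hon, hsing⟩
    obtain ⟨S, hS⟩ := exists_eq_smul_signVec_of_sq_eq (singularAt_iff.1 hsing)
    have hx0 : x 0 ≠ 0 := fun h => hx (by rw [hS, h, zero_smul])
    exact ⟨x 0, hx0, S, (onSegre_smul_signVec hx0 S).1 (hS ▸ hon), hS⟩
  · rintro ⟨c, hc, S, hS, rfl⟩
    exact ⟨(onSegre_smul_signVec hc S).2 hS, singularAt_smul_signVec c S⟩

lemma mem_segreSing_iff (p : Projectivization ℂ (Fin 6 → ℂ)) :
    p ∈ segreSing ↔ ∃ S : Finset (Fin 6), S.card = 3 ∧ p = signPoint S := by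
  constructor
  · intro hp
    obtain ⟨c, hc, S, hS, hrep⟩ := (onSegre_and_singularAt_iff p.rep_nonzero).1 hp
    refine ⟨S, hS, ?_⟩
    rw [← p.mk_rep, signPoint, mk_eq_mk_iff']
    exact ⟨c, hrep.symm⟩
  · rintro ⟨S, hS, rfl⟩
    obtain ⟨a, ha⟩ := exists_smul_eq_mk_rep ℂ (signVec S) (signVec_ne_zero S)
    rw [segreSing, Set.mem_ofPred_eq, signPoint, ← ha]
    exact (onSegre_and_singularAt_iff (ha ▸ rep_nonzero _)).2 ⟨a, a.ne_zero, S, hS, rfl⟩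

lemma segreSing_eq_image :
    segreSing = signPoint '' {S : Finset (Fin 6) | S.card = 3 ∧ 0 ∈ S} := by
  ext p
  rw [mem_segreSing_iff]
  constructor
  · rintro ⟨S, hS, rfl⟩
    by_cases h0 : (0 : Fin 6) ∈ S
    · exact ⟨S, ⟨hS, h0⟩, rfl⟩
    · refine ⟨Sᶜ, ⟨?_, mem_compl.2 h0⟩, signPoint_compl S⟩
      rw [card_compl, hS, Fintype.card_fin]
  · rintro ⟨S, ⟨hS, -⟩, rfl⟩
    exact ⟨S, hS, rfl⟩

lemma ncard_segreSing : segreSing.ncard = 10 := by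
  rw [segreSing_eq_image, ((signPoint_injOn 0).mono fun _ h => h.2).ncard_image]
  have hfin : {S : Finset (Fin 6) | S.card = 3 ∧ 0 ∈ S} =
      ↑(univ.filter fun S : Finset (Fin 6) => S.card = 3 ∧ 0 ∈ S) := by
    ext; simp
  rw [hfin, Set.ncard_coe_finset]
  decide

lemma segreVec_eq_signVec : segreVec = signVec {0, 1, 2} := by
  funext i
  fin_cases i <;> simp [segreVec, signVec]

/-- The Segre cubic `{Σ xᵢ = Σ xᵢ³ = 0} ⊂ ℙ⁵` has exactly `10` singular points, namely
the orbit of `[1 : 1 : 1 : −1 : −1 : −1]` under permutation of the coordinates, and each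
of them is an ordinary double point. -/
theorem segre_cubic_singularities :
    segreSing =
      {p | ∃ (v : Fin 6 → ℂ) (hv : v ≠ 0), p = Projectivization.mk ℂ v hv ∧
        ∃ σ : Equiv.Perm (Fin 6), ∀ i, v i = segreVec (σ i)} ∧
    segreSing.ncard = 10 ∧
    ∀ p ∈ segreSing, isODPAt (Projectivization.rep p) := by
  refine ⟨?_, ncard_segreSing, fun p hp => ?_⟩
  · ext p
    have hcard : ({0, 1, 2} : Finset (Fin 6)).card = 3 := rfl
    simp only [mem_segreSing_iff, Set.mem_ofPred_eq, segreVec_eq_signVec,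
      exists_perm_comp_signVec_iff, hcard]
    constructor
    · rintro ⟨S, hS, rfl⟩
      exact ⟨_, signVec_ne_zero S, rfl, S, hS, rfl⟩
    · rintro ⟨_, _, rfl, S, hS, rfl⟩
      exact ⟨S, hS, rfl⟩
  · exact isODPAt_of_singularAt p.rep_nonzero hp.2
end
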